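/- Let G be a finite connected undirected weighted graph, C a clustering of G with radius R (every node u is within weighted distance d_u ≤ R of its cluster center c_u), and let G_C be the quotient graph whose nodes are the clusters and which has, for each edge (u,v) of G with c_u ≠ c_v, an edge between the clusters of u and v of weight w(u,v) + d_u + d_v. Then the weighted diameter of G satisfies Φ(G) ≤ Φ(G_C) + 2R. -/

import Mathlib

/-- `l` is a walk from `u` to `v` in the graph with edge relation `E`. -/
def WalkFrom {V : Type*} (E : V → V → Prop) (u v : V) (l : List V) : Prop :=
  l ≠ [] ∧ l.Chain' E ∧ l.head? = some u ∧ l.getLast? = some v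

/-- total weight of a walk given by the list of its vertices -/
def wgt {V : Type*} (w : V → V → ℝ) (l : List V) : ℝ :=
  ((l.zip l.tail).map fun p => w p.1 p.2).sum

/-- weighted shortest-path distance -/
noncomputable def gdist {V : Type*} (E : V → V → Prop) (w : V → V → ℝ) (u v : V) : ℝ :=
  sInf {x | ∃ l, WalkFrom E u v l ∧ wgt w l = x}

/-- edge relation of the quotient graph: clusters `i ≠ j` are adjacent iff some
edge of `G` crosses between them -/
def EC {V : Type*} {τ : ℕ} (E : V → V → Prop) (cl : V → Fin τ) :
    Fin τ → Fin τ → Prop :=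
  fun i j => i ≠ j ∧ ∃ u v, E u v ∧ cl u = i ∧ cl v = j

/-- weight of a quotient edge: the minimum over crossing edges `(u,v)` of
`w(u,v) + d_u + d_v`, where `d_u = dist(u, center of u's cluster)` -/
noncomputable def wC {V : Type*} {τ : ℕ} (E : V → V → Prop) (w : V → V → ℝ)
    (cl : V → Fin τ) (ctr : Fin τ → V) : Fin τ → Fin τ → ℝ :=
  fun i j => sInf {x | ∃ u v, E u v ∧ cl u = i ∧ cl v = j ∧
    x = w u v + gdist E w u (ctr i) + gdist E w v (ctr j)}

/-- weighted diameter -/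
noncomputable def diam {V : Type*} (E : V → V → Prop) (w : V → V → ℝ) : ℝ :=
  ⨆ u, ⨆ v, gdist E w u v

/-!
Walk from `u` to the centre `c_u`, then along a shortest walk of `G_C` between the two
clusters, then from `c_v` to `v`: `d(u, v) ≤ d_u + d(c_u, c_v) + d_v`. The middle term is at
most the quotient distance because a quotient edge `(i, j)` of weight `w(u, v) + d_u + d_v`
is realised in `G` by a walk `c_i → u → v → c_j`, so `(i, j) ↦ d(c_i, c_j)` is a
triangle-inequality function dominated by the quotient weights, hence by the weight of
every quotient walk. Such walks exist because every walk of `G` projects to one of `G_C`.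
-/

open Pointwise

section Walks

variable {V : Type*} {E : V → V → Prop} {w : V → V → ℝ}

lemma walkFrom_iff {u v : V} {l : List V} :
    WalkFrom E u v l ↔ l ≠ [] ∧ l.IsChain E ∧ l.head? = some u ∧ l.getLast? = some v :=
  Iff.rfl

@[simp] lemma wgt_singleton (a : V) : wgt w [a] = 0 := by simp [wgt]

@[simp] lemma wgt_cons_cons (a b : V) (t : List V) :
    wgt w (a :: b :: t) = w a b + wgt w (b :: t) := by simp [wgt]

lemma wgt_append_cons (l : List V) (x : V) (t : List V) :
    wgt w (l ++ x :: t) = wgt w (l ++ [x]) + wgt w (x :: t) := by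
  match l with
  | [] => simp
  | [a] => simp
  | a :: b :: l =>
    have ih := wgt_append_cons (b :: l) x t
    simp only [List.cons_append, wgt_cons_cons] at ih ⊢
    rw [ih]
    ring

lemma wgt_reverse (hwsym : ∀ u v, w u v = w v u) : ∀ l : List V, wgt w l.reverse = wgt w l
  | [] => rfl
  | [a] => rfl
  | a :: b :: t => by
    rw [List.reverse_cons, List.reverse_cons, List.append_assoc, List.singleton_append,
      wgt_append_cons, ← List.reverse_cons, wgt_reverse hwsym (b :: t), wgt_cons_cons,
      wgt_singleton, wgt_cons_cons, hwsym]
    ring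

lemma wgt_nonneg (hpos : ∀ u v, E u v → 0 < w u v) : ∀ {l : List V}, l.IsChain E → 0 ≤ wgt w l
  | [], _ => le_rfl
  | [_], _ => le_rfl
  | a :: b :: t, h => by
    rw [List.isChain_cons_cons] at h
    rw [wgt_cons_cons]
    exact add_nonneg (hpos a b h.1).le (wgt_nonneg hpos h.2)

lemma walkFrom_singleton (u : V) : WalkFrom E u u [u] := by simp [walkFrom_iff]

lemma walkFrom_pair {u v : V} (h : E u v) : WalkFrom E u v [u, v] := by simp [walkFrom_iff, h]

lemma walkFrom_singleton_iff {u v x : V} : WalkFrom E u v [x] ↔ x = u ∧ x = v := by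
  simp [walkFrom_iff]

lemma walkFrom_cons_cons_iff {u v x y : V} {t : List V} :
    WalkFrom E u v (x :: y :: t) ↔ x = u ∧ E x y ∧ WalkFrom E y v (y :: t) := by
  simp only [walkFrom_iff, ne_eq, reduceCtorEq, not_false_eq_true, List.isChain_cons_cons,
    List.head?_cons, Option.some.injEq, List.getLast?_cons_cons, true_and]
  tauto

lemma WalkFrom.exists_eq_cons {u v : V} {l : List V} (h : WalkFrom E u v l) :
    ∃ t, l = u :: t := by
  obtain ⟨hne, -, hhead, -⟩ := h
  cases l with
  | nil => exact absurd rfl hne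
  | cons a t => exact ⟨t, by simpa using hhead⟩

lemma WalkFrom.append {u x v : V} {l₁ l₂ : List V} (h₁ : WalkFrom E u x l₁)
    (h₂ : WalkFrom E x v l₂) :
    ∃ l, WalkFrom E u v l ∧ wgt w l = wgt w l₁ + wgt w l₂ := by
  obtain ⟨t, rfl⟩ := h₂.exists_eq_cons
  obtain ⟨-, hc₁, hh₁, hl₁⟩ := walkFrom_iff.mp h₁
  obtain ⟨-, hc₂, -, hl₂⟩ := walkFrom_iff.mp h₂
  obtain ⟨l₁, rfl⟩ := List.getLast?_eq_some_iff.mp hl₁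
  refine ⟨l₁ ++ x :: t, walkFrom_iff.mpr ⟨by simp, ?_, ?_, ?_⟩, wgt_append_cons l₁ x t⟩
  · rw [List.isChain_append] at hc₁ ⊢
    exact ⟨hc₁.1, hc₂, fun a ha b hb => by cases hb; exact hc₁.2.2 a ha x rfl⟩
  · cases l₁ <;> simpa using hh₁
  · rw [List.getLast?_append, hl₂]; rfl

lemma WalkFrom.reverse (hsym : ∀ u v, E u v → E v u) {u v : V} {l : List V}
    (h : WalkFrom E u v l) : WalkFrom E v u l.reverse := by
  obtain ⟨hne, hc, hh, hl⟩ := h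
  exact ⟨by simpa using hne, List.isChain_reverse.mpr (hc.imp fun a b => hsym a b),
    by rw [List.head?_reverse, hl], by rw [List.getLast?_reverse, hh]⟩

lemma le_wgt_of_walkFrom {D : V → V → ℝ} (hself : ∀ a, D a a ≤ 0)
    (htri : ∀ a b c, D a c ≤ D a b + D b c) (hedge : ∀ a b, E a b → D a b ≤ w a b)
    {u v : V} {l : List V} (h : WalkFrom E u v l) : D u v ≤ wgt w l := by
  induction l generalizing u with
  | nil => exact absurd rfl h.1
  | cons x t ih =>
    cases t with
    | nil =>
      obtain ⟨rfl, rfl⟩ := walkFrom_singleton_iff.mp h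
      simpa using hself x
    | cons y t =>
      obtain ⟨rfl, hxy, hrest⟩ := walkFrom_cons_cons_iff.mp h
      rw [wgt_cons_cons]
      linarith [htri x y v, hedge x y hxy, ih hrest]

end Walks

section Distance

variable {V : Type*} {E : V → V → Prop} {w : V → V → ℝ}

def walkWeights (E : V → V → Prop) (w : V → V → ℝ) (u v : V) : Set ℝ :=
  {x | ∃ l, WalkFrom E u v l ∧ wgt w l = x}

lemma gdist_eq_sInf_walkWeights (u v : V) : gdist E w u v = sInf (walkWeights E w u v) := rfl

lemma walkWeights_nonempty (hconn : ∀ u v : V, ∃ l, WalkFrom E u v l) (u v : V) :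
    (walkWeights E w u v).Nonempty :=
  let ⟨l, hl⟩ := hconn u v; ⟨wgt w l, l, hl, rfl⟩

lemma walkWeights_bddBelow (hpos : ∀ u v, E u v → 0 < w u v) (u v : V) :
    BddBelow (walkWeights E w u v) :=
  ⟨0, fun _ ⟨_, hl, he⟩ => he ▸ wgt_nonneg hpos hl.2.1⟩

lemma walkWeights_add_subset (u x v : V) :
    walkWeights E w u x + walkWeights E w x v ⊆ walkWeights E w u v := by
  rintro _ ⟨_, ⟨l₁, h₁, rfl⟩, _, ⟨l₂, h₂, rfl⟩, rfl⟩
  obtain ⟨l, hl, hwl⟩ := h₁.append (w := w) h₂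
  exact ⟨l, hl, hwl⟩

lemma gdist_le_wgt (hpos : ∀ u v, E u v → 0 < w u v) {u v : V} {l : List V}
    (h : WalkFrom E u v l) : gdist E w u v ≤ wgt w l :=
  csInf_le (walkWeights_bddBelow hpos u v) ⟨l, h, rfl⟩

lemma gdist_self_nonpos (hpos : ∀ u v, E u v → 0 < w u v) (u : V) : gdist E w u u ≤ 0 := by
  simpa using gdist_le_wgt hpos (walkFrom_singleton u)

lemma gdist_le_of_adj (hpos : ∀ u v, E u v → 0 < w u v) {u v : V} (h : E u v) :
    gdist E w u v ≤ w u v := by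
  simpa using gdist_le_wgt hpos (walkFrom_pair h)

lemma gdist_triangle (hpos : ∀ u v, E u v → 0 < w u v)
    (hconn : ∀ u v : V, ∃ l, WalkFrom E u v l) (u x v : V) :
    gdist E w u v ≤ gdist E w u x + gdist E w x v := by
  simp only [gdist_eq_sInf_walkWeights]
  rw [← csInf_add (walkWeights_nonempty hconn u x) (walkWeights_bddBelow hpos u x)
    (walkWeights_nonempty hconn x v) (walkWeights_bddBelow hpos x v)]
  exact csInf_le_csInf (walkWeights_bddBelow hpos u v)
    ((walkWeights_nonempty hconn u x).add (walkWeights_nonempty hconn x v))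
    (walkWeights_add_subset u x v)

lemma gdist_comm (hsym : ∀ u v, E u v → E v u) (hwsym : ∀ u v, w u v = w v u)
    (hpos : ∀ u v, E u v → 0 < w u v) (hconn : ∀ u v : V, ∃ l, WalkFrom E u v l)
    (u v : V) : gdist E w u v = gdist E w v u := by
  have key (a b : V) : gdist E w a b ≤ gdist E w b a := by
    refine le_csInf (walkWeights_nonempty hconn b a) ?_
    rintro _ ⟨l, hl, rfl⟩
    exact wgt_reverse hwsym l ▸ gdist_le_wgt hpos (hl.reverse hsym)
  exact (key u v).antisymm (key v u)

lemma gdist_le_diam [Finite V] (u v : V) : gdist E w u v ≤ diam E w :=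
  (le_ciSup (Set.finite_range _).bddAbove v).trans
    (le_ciSup (f := fun u => ⨆ v, gdist E w u v) (Set.finite_range _).bddAbove u)

end Distance

section Quotient

variable {V : Type*} {E : V → V → Prop} {w : V → V → ℝ} {τ : ℕ} (cl : V → Fin τ)
  (ctr : Fin τ → V)

lemma WalkFrom.exists_walkFrom_EC {u v : V} {l : List V} (h : WalkFrom E u v l) :
    ∃ m, WalkFrom (EC E cl) (cl u) (cl v) m := by
  induction l generalizing u with
  | nil => exact absurd rfl h.1
  | cons x t ih =>
    cases t with
    | nil =>
      obtain ⟨rfl, rfl⟩ := walkFrom_singleton_iff.mp h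
      exact ⟨[cl x], walkFrom_singleton _⟩
    | cons y t =>
      obtain ⟨rfl, hxy, hrest⟩ := walkFrom_cons_cons_iff.mp h
      obtain ⟨m, hm⟩ := ih hrest
      by_cases hcl : cl x = cl y
      · exact ⟨m, hcl ▸ hm⟩
      · obtain ⟨m, rfl⟩ := hm.exists_eq_cons
        exact ⟨cl x :: cl y :: m,
          walkFrom_cons_cons_iff.mpr ⟨rfl, ⟨hcl, x, y, hxy, rfl, rfl⟩, hm⟩⟩

variable (hsym : ∀ u v, E u v → E v u) (hwsym : ∀ u v, w u v = w v u)
  (hpos : ∀ u v, E u v → 0 < w u v) (hconn : ∀ u v : V, ∃ l, WalkFrom E u v l)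
include hsym hwsym hpos hconn

lemma gdist_ctr_le_wC {i j : Fin τ} (hij : EC E cl i j) :
    gdist E w (ctr i) (ctr j) ≤ wC E w cl ctr i j := by
  obtain ⟨-, u₀, v₀, he₀, hu₀, hv₀⟩ := hij
  refine le_csInf ⟨_, u₀, v₀, he₀, hu₀, hv₀, rfl⟩ ?_
  rintro _ ⟨u, v, he, rfl, rfl, rfl⟩
  linarith [gdist_triangle hpos hconn (ctr (cl u)) u (ctr (cl v)),
    gdist_triangle hpos hconn u v (ctr (cl v)), gdist_le_of_adj hpos he,
    gdist_comm hsym hwsym hpos hconn (ctr (cl u)) u]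

lemma gdist_ctr_le_gdist_EC (hctr : ∀ i, cl (ctr i) = i) (i j : Fin τ) :
    gdist E w (ctr i) (ctr j) ≤ gdist (EC E cl) (wC E w cl ctr) i j := by
  obtain ⟨m, hm⟩ := (hconn (ctr i) (ctr j)).choose_spec.exists_walkFrom_EC cl
  rw [hctr, hctr] at hm
  refine le_csInf ⟨_, m, hm, rfl⟩ ?_
  rintro _ ⟨m', hm', rfl⟩
  exact le_wgt_of_walkFrom (D := fun i j => gdist E w (ctr i) (ctr j))
    (fun _ => gdist_self_nonpos hpos _) (fun _ _ _ => gdist_triangle hpos hconn _ _ _)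
    (fun _ _ => gdist_ctr_le_wC cl ctr hsym hwsym hpos hconn) hm'

end Quotient

theorem stmt5_general {V : Type*} [Nonempty V]
    (E : V → V → Prop) (w : V → V → ℝ)
    (hsym : ∀ u v, E u v → E v u) (hwsym : ∀ u v, w u v = w v u)
    (hpos : ∀ u v, E u v → 0 < w u v)
    (hconn : ∀ u v : V, ∃ l, WalkFrom E u v l)
    (τ : ℕ) (cl : V → Fin τ) (ctr : Fin τ → V)
    (hctr : ∀ i, cl (ctr i) = i)
    (R : ℝ) (hR : ∀ u, gdist E w u (ctr (cl u)) ≤ R) :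
    diam E w ≤ diam (EC E cl) (wC E w cl ctr) + 2 * R := by
  refine ciSup_le fun u => ciSup_le fun v => ?_
  have hv : gdist E w (ctr (cl v)) v ≤ R := gdist_comm hsym hwsym hpos hconn _ v ▸ hR v
  have hcenters : gdist E w (ctr (cl u)) (ctr (cl v)) ≤ diam (EC E cl) (wC E w cl ctr) :=
    (gdist_ctr_le_gdist_EC cl ctr hsym hwsym hpos hconn hctr _ _).trans (gdist_le_diam _ _)
  linarith [hR u, gdist_triangle hpos hconn u (ctr (cl u)) v,
    gdist_triangle hpos hconn (ctr (cl u)) (ctr (cl v)) v]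

theorem stmt5 {V : Type*} [Fintype V] [Nonempty V]
    (E : V → V → Prop) (w : V → V → ℝ)
    (hsym : ∀ u v, E u v → E v u) (hwsym : ∀ u v, w u v = w v u)
    (hpos : ∀ u v, E u v → 0 < w u v)
    (hconn : ∀ u v : V, ∃ l, WalkFrom E u v l)
    (τ : ℕ) (cl : V → Fin τ) (ctr : Fin τ → V)
    (hctr : ∀ i, cl (ctr i) = i)
    (R : ℝ) (hR : ∀ u, gdist E w u (ctr (cl u)) ≤ R) :
    diam E w ≤ diam (EC E cl) (wC E w cl ctr) + 2 * R :=
  stmt5_general E w hsym hwsym hpos hconn τ cl ctr hctr R hR
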